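/- arXiv:2410.23232 — 3 statements merged into one kernel-verified Lean document; each statement's English description precedes it below -/
import Mathlib

section
/- Suppose f = (1/n)Σᵢ fᵢ where each fᵢ is convex and β-smooth, θ* minimizes f, and σ_f² := E_i‖∇fᵢ(θ*)‖². Then for SGD with step size η, conditioned on θ_{t−1}, the iterate satisfies E[‖θ_t − θ*‖²] ≥ (1 − 2ηβ − η²β²)‖θ_{t−1} − θ*‖² + (η²/2)σ_f². -/
open RealInnerProductSpace

/-- One step of SGD on `f = (1/n)Σᵢ fᵢ` (each `fᵢ` convex and `β`-smooth, `θ*` minimizing `f`)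
satisfies, conditionally on the previous iterate `θprev`,
`E[‖θ_t − θ*‖²] ≥ (1 − 2ηβ − η²β²)‖θprev − θ*‖² + (η²/2)σ_f²`. -/
theorem stmt11 {E : Type*} [NormedAddCommGroup E] [InnerProductSpace ℝ E] [CompleteSpace E]
    {n : ℕ} (hn : 0 < n) (f : Fin n → E → ℝ) (g : Fin n → E → E) (β η : ℝ)
    (hη : 0 ≤ η)
    (hconv : ∀ i, ConvexOn ℝ Set.univ (f i))
    (hgrad : ∀ i θ, HasGradientAt (f i) (g i θ) θ)
    (hsmooth : ∀ i θ θ', ‖g i θ - g i θ'‖ ≤ β * ‖θ - θ'‖)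
    (θs : E)
    (hmin : ∀ θ, (n : ℝ)⁻¹ * ∑ i, f i θs ≤ (n : ℝ)⁻¹ * ∑ i, f i θ)
    (hstat : (n : ℝ)⁻¹ • ∑ i, g i θs = 0)
    (θprev : E) :
    (n : ℝ)⁻¹ * ∑ i, ‖θprev - η • g i θprev - θs‖ ^ 2 ≥
      (1 - 2 * η * β - η ^ 2 * β ^ 2) * ‖θprev - θs‖ ^ 2 +
        η ^ 2 / 2 * ((n : ℝ)⁻¹ * ∑ i, ‖g i θs‖ ^ 2) := by
  set u := θprev - θs with hu
  have hsum0 : ∑ i, g i θs = 0 := by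
    have hne : ((n : ℝ)⁻¹) ≠ 0 := inv_ne_zero (Nat.cast_ne_zero.mpr hn.ne')
    rcases smul_eq_zero.mp hstat with h | h
    · exact absurd h hne
    · exact h
  have key : ∀ i, (1 - 2*η*β - η^2*β^2) * ‖u‖^2 - 2*η*⟪u, g i θs⟫ + η^2/2 * ‖g i θs‖^2
      ≤ ‖θprev - η • g i θprev - θs‖^2 := by
    intro i
    set a := g i θprev - g i θs with ha
    set b := g i θs with hb
    have ha1 : ‖a‖ ≤ β * ‖u‖ := hsmooth i θprev θs
    have hrw : θprev - η • g i θprev - θs = u - η • (a + b) := by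
      rw [hu, ha, hb]; module
    rw [hrw]
    have h1 : ‖u - η • (a + b)‖^2 = ‖u‖^2 - 2*(η*(⟪u,a⟫ + ⟪u, b⟫)) + η^2 * ‖a + b‖^2 := by
      rw [norm_sub_sq_real, real_inner_smul_right, inner_add_right, norm_smul,
        Real.norm_eq_abs, mul_pow, sq_abs]
    have h2 : ⟪u,a⟫ ≤ ‖u‖*‖a‖ := real_inner_le_norm u a
    have h3 : ‖b‖ ≤ ‖a + b‖ + ‖a‖ := by
      have := norm_sub_le (a + b) a
      simpa using this
    have h4 : ‖u‖*‖a‖ ≤ ‖u‖ * (β * ‖u‖) := by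
      exact mul_le_mul_of_nonneg_left ha1 (norm_nonneg u)
    have h2' : -(‖u‖ * ‖a‖) ≤ ⟪u,a⟫ := (abs_le.mp (abs_real_inner_le_norm u a)).1
    have hb2 : ‖b‖^2 ≤ 2*‖a + b‖^2 + 2*‖a‖^2 := by
      nlinarith [sq_nonneg (‖a + b‖ - ‖a‖), norm_nonneg b, norm_nonneg (a+b), norm_nonneg a]
    nlinarith [mul_le_mul_of_nonneg_left hb2 (sq_nonneg η),
      mul_le_mul_of_nonneg_left h4 hη,
      mul_le_mul_of_nonneg_left ((neg_le.mpr h2').trans h4) hη,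
      mul_le_mul_of_nonneg_left (mul_le_mul ha1 ha1 (norm_nonneg a) ((norm_nonneg a).trans ha1)) (sq_nonneg η)]
  have hsum : ∑ i, ((1 - 2*η*β - η^2*β^2) * ‖u‖^2 - 2*η*⟪u, g i θs⟫ + η^2/2 * ‖g i θs‖^2)
      ≤ ∑ i, ‖θprev - η • g i θprev - θs‖^2 :=
    Finset.sum_le_sum fun i _ => key i
  have hinner : ∑ i, ⟪u, g i θs⟫ = 0 := by
    rw [← inner_sum, hsum0, inner_zero_right]
  have hnpos : (0:ℝ) < n := by exact_mod_cast hn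
  have hsum2 : (n:ℝ) * ((1 - 2*η*β - η^2*β^2) * ‖u‖^2) + η^2/2 * ∑ i, ‖g i θs‖^2
      ≤ ∑ i, ‖θprev - η • g i θprev - θs‖^2 := by
    refine le_trans (le_of_eq ?_) hsum
    rw [Finset.sum_add_distrib, Finset.sum_sub_distrib]
    simp only [← Finset.mul_sum]
    rw [hinner, Finset.sum_const, Finset.card_univ, Fintype.card_fin, nsmul_eq_mul]
    ring
  have := mul_le_mul_of_nonneg_left hsum2 (by positivity : (0:ℝ) ≤ (n:ℝ)⁻¹)
  rw [ge_iff_le]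
  calc (1 - 2 * η * β - η ^ 2 * β ^ 2) * ‖u‖ ^ 2 + η ^ 2 / 2 * ((n : ℝ)⁻¹ * ∑ i, ‖g i θs‖ ^ 2)
      = (n:ℝ)⁻¹ * ((n:ℝ) * ((1 - 2*η*β - η^2*β^2) * ‖u‖^2) + η^2/2 * ∑ i, ‖g i θs‖^2) := by
        field_simp
    _ ≤ (n:ℝ)⁻¹ * ∑ i, ‖θprev - η • g i θprev - θs‖^2 := this
end

section
/- Let C, σ², D > 0 and consider the error function E(η, t) = exp(−tCη·g(η))·D + η²σ²/2 for η ∈ (0, 2/(5β)) where C = (12/5)β and g(η) = (2 − Cη)/(1 − Cη). For any fixed step size η in this range, min over η of E(η, t) is Ω(1/t²): i.e., there exists a constant c > 0 (depending on C, σ², D but not t) such that for all t large enough and all η ∈ (0, 2/(5β)), exp(−tCη·g(η))·D + η²σ²/2 ≥ c/t². -/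
/-- For `C = (12/5)β` and `g(η) = (2 − Cη)/(1 − Cη)`, the two-term error
`E(η, t) = exp(−tCη·g(η))·D + η²σ²/2` is `Ω(1/t²)` uniformly over step sizes
`η ∈ (0, 2/(5β))`: there is `c > 0` (independent of `t`) such that for all large `t`
and all admissible `η`, `E(η, t) ≥ c/t²`. -/
theorem stmt15 (β D σ2 : ℝ) (hβ : 0 < β) (hD : 0 < D) (hσ2 : 0 < σ2) :
    ∃ c > 0, ∃ T : ℕ, ∀ t : ℕ, T ≤ t → ∀ η : ℝ, 0 < η → η < 2 / (5 * β) →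
      Real.exp (-(t : ℝ) * ((12 / 5) * β) * η *
          ((2 - (12 / 5) * β * η) / (1 - (12 / 5) * β * η))) * D +
        η ^ 2 * σ2 / 2 ≥ c / (t : ℝ) ^ 2 := by
  set C : ℝ := (12 / 5) * β with hC
  have hCpos : 0 < C := by positivity
  refine ⟨min (σ2 / 2) (Real.exp (-(50 * C)) * D), lt_min (by positivity) (by positivity),
    1, ?_⟩
  intro t ht η hη hη2
  have ht0 : (1 : ℝ) ≤ (t : ℝ) := by exact_mod_cast ht
  have htpos : (0 : ℝ) < (t : ℝ) := by linarith
  have ht2 : (1 : ℝ) ≤ (t : ℝ) ^ 2 := by nlinarith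
  have ht2pos : (0 : ℝ) < (t : ℝ) ^ 2 := by positivity
  have hCη : C * η < 24 / 25 := by
    have h5 : 0 < 5 * β := by positivity
    have key : η * (5 * β) < 2 := (lt_div_iff₀ h5).mp hη2
    nlinarith
  have h1 : (0 : ℝ) < 1 - C * η := by linarith
  have hgpos : 0 < (2 - C * η) / (1 - C * η) := by
    apply div_pos <;> linarith
  have hgle : (2 - C * η) / (1 - C * η) ≤ 50 := by
    rw [div_le_iff₀ h1]; nlinarith
  rcases le_or_gt (1 / (t : ℝ)) η with hcase | hcase
  · have hsq : (1 / (t : ℝ)) ^ 2 ≤ η ^ 2 := by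
      apply sq_le_sq' <;> nlinarith [one_div_pos.mpr htpos]
    have hsq' : (1 : ℝ) ≤ η ^ 2 * (t : ℝ) ^ 2 := by
      have : (1 / (t : ℝ)) ^ 2 = 1 / (t : ℝ) ^ 2 := by ring
      rw [this, div_le_iff₀ ht2pos] at hsq
      linarith
    have h2 : σ2 / 2 / (t : ℝ) ^ 2 ≤ η ^ 2 * σ2 / 2 := by
      rw [div_le_iff₀ ht2pos]
      nlinarith
    have hexp : 0 ≤ Real.exp (-(t : ℝ) * C * η * ((2 - C * η) / (1 - C * η))) * D :=
      by positivity
    have hmin : min (σ2 / 2) (Real.exp (-(50 * C)) * D) / (t : ℝ) ^ 2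
        ≤ σ2 / 2 / (t : ℝ) ^ 2 := by
      gcongr
      exact min_le_left _ _
    linarith
  · have htη : (t : ℝ) * η ≤ 1 := by
      have h := mul_lt_mul_of_pos_left hcase htpos
      rw [mul_one_div, div_self (ne_of_gt htpos)] at h
      linarith
    have harg : (t : ℝ) * C * η * ((2 - C * η) / (1 - C * η)) ≤ 50 * C := by
      have h0 : 0 ≤ (t : ℝ) * C * η := by positivity
      calc (t : ℝ) * C * η * ((2 - C * η) / (1 - C * η))
          ≤ (t : ℝ) * C * η * 50 := mul_le_mul_of_nonneg_left hgle h0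
        _ ≤ 50 * C := by nlinarith
    have hexp : Real.exp (-(50 * C)) ≤
        Real.exp (-(t : ℝ) * C * η * ((2 - C * η) / (1 - C * η))) := by
      apply Real.exp_le_exp.mpr
      nlinarith [harg]
    have h3 : Real.exp (-(50 * C)) * D ≤
        Real.exp (-(t : ℝ) * C * η * ((2 - C * η) / (1 - C * η))) * D :=
      mul_le_mul_of_nonneg_right hexp hD.le
    have h4 : min (σ2 / 2) (Real.exp (-(50 * C)) * D) / (t : ℝ) ^ 2 ≤
        Real.exp (-(50 * C)) * D :=
      le_trans (div_le_self (le_min (by positivity) (by positivity)) ht2)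
        (min_le_right _ _)
    have hσnn : 0 ≤ η ^ 2 * σ2 / 2 := by positivity
    linarith
end

section
/- Let f = (1/n)Σᵢ fᵢ be α-strongly convex with each fᵢ convex and β-smooth, minimized at θ*, with σ_f² = E_i‖∇fᵢ(θ*)‖² = 0. Then SGD with fixed step size η ∈ (0, 1/(2β)) satisfies E[‖θ_t − θ*‖²] ≤ (1 − ηα)^t ‖θ_0 − θ*‖² for all t ≥ 0. -/
open RealInnerProductSpace

/-- The SGD iterate after `t` steps, as a function of the sampled indices
`s : Fin t → Fin n`, with update `θ ↦ θ − η • g i θ`. -/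
noncomputable def sgdIter {E : Type*} [AddCommGroup E] [Module ℝ E] {n : ℕ}
    (g : Fin n → E → E) (η : ℝ) (θ0 : E) : (t : ℕ) → (Fin t → Fin n) → E
  | 0, _ => θ0
  | t + 1, s =>
      sgdIter g η θ0 t (fun j => s j.castSucc) -
        η • g (s (Fin.last t)) (sgdIter g η θ0 t (fun j => s j.castSucc))

section SGDAux

variable {E : Type*} [NormedAddCommGroup E] [InnerProductSpace ℝ E] [CompleteSpace E]

lemma sgd_hasDerivAt_line {f : E → ℝ} {g : E → E}
    (hg : ∀ θ, HasGradientAt f (g θ) θ) (x v : E) (t : ℝ) :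
    HasDerivAt (fun t : ℝ => f (x + t • v)) ⟪g (x + t • v), v⟫ t := by
  have hc : HasDerivAt (fun t : ℝ => x + t • v) v t := by
    simpa using ((hasDerivAt_id t).smul_const v).const_add x
  have h := (hg (x + t • v)).hasFDerivAt.comp_hasDerivAt t hc
  simpa [InnerProductSpace.toDual_apply_apply, Function.comp_def] using h

lemma sgd_convexOn_line {f : E → ℝ} (hconv : ConvexOn ℝ Set.univ f) (x v : E) :
    ConvexOn ℝ Set.univ (fun t : ℝ => f (x + t • v)) := by
  have h := hconv.comp_affineMap (AffineMap.lineMap x (x + v) : ℝ →ᵃ[ℝ] E)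
  simp only [Set.preimage_univ] at h
  have e : (fun t : ℝ => f (x + t • v)) = f ∘ (AffineMap.lineMap x (x + v) : ℝ →ᵃ[ℝ] E) := by
    funext t
    simp [AffineMap.lineMap_apply, add_comm]
  rw [e]; exact h

lemma sgd_first_order {f : E → ℝ} {g : E → E} (hconv : ConvexOn ℝ Set.univ f)
    (hg : ∀ θ, HasGradientAt f (g θ) θ) (x y : E) :
    f x + ⟪g x, y - x⟫ ≤ f y := by
  have hline := sgd_convexOn_line hconv x (y - x)
  have hd := sgd_hasDerivAt_line hg x (y - x) 0
  have hs := hline.le_slope_of_hasDerivAt (x := (0:ℝ)) (y := 1)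
    (Set.mem_univ _) (Set.mem_univ _) one_pos (by simpa using hd)
  simp only [slope_def_field, zero_smul, add_zero, one_smul, add_sub_cancel] at hs
  have : f x + ⟪g x, y - x⟫ ≤ f x + (f y - f x) / (1 - 0) := by
    have h0 : (fun t : ℝ => f (x + t • (y - x))) 0 = f x := by simp
    linarith [hs]
  simpa using this

lemma sgd_descent {f : E → ℝ} {g : E → E} {β : ℝ} (hβ : 0 < β)
    (hg : ∀ θ, HasGradientAt f (g θ) θ)
    (hsm : ∀ θ θ', ‖g θ - g θ'‖ ≤ β * ‖θ - θ'‖) (x y : E) :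
    f y ≤ f x + ⟪g x, y - x⟫ + β / 2 * ‖y - x‖ ^ 2 := by
  set v := y - x with hv
  have hgc : Continuous g := by
    have : LipschitzWith β.toNNReal g :=
      LipschitzWith.of_dist_le_mul fun a b => by
        simpa [dist_eq_norm, Real.coe_toNNReal β hβ.le] using hsm a b
    exact this.continuous
  have hcurve : Continuous fun t : ℝ => x + t • v := by continuity
  have hcont : Continuous fun t : ℝ => ⟪g (x + t • v), v⟫ :=
    (hgc.comp hcurve).inner continuous_const
  have hd : ∀ t ∈ Set.uIcc (0:ℝ) 1,
      HasDerivAt (fun t : ℝ => f (x + t • v)) ⟪g (x + t • v), v⟫ t :=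
    fun t _ => sgd_hasDerivAt_line hg x v t
  have hftc : (∫ t in (0:ℝ)..1, ⟪g (x + t • v), v⟫) = f (x + (1:ℝ) • v) - f (x + (0:ℝ) • v) :=
    intervalIntegral.integral_eq_sub_of_hasDerivAt hd (hcont.intervalIntegrable 0 1)
  have hcont2 : Continuous fun t : ℝ => ⟪g x, v⟫ + β * ‖v‖ ^ 2 * t := by continuity
  have hmono : (∫ t in (0:ℝ)..1, ⟪g (x + t • v), v⟫)
      ≤ ∫ t in (0:ℝ)..1, (⟪g x, v⟫ + β * ‖v‖ ^ 2 * t) := by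
    apply intervalIntegral.integral_mono_on one_pos.le (hcont.intervalIntegrable 0 1)
      (hcont2.intervalIntegrable 0 1)
    intro t ht
    have h1 : ⟪g (x + t • v) - g x, v⟫ ≤ ‖g (x + t • v) - g x‖ * ‖v‖ :=
      real_inner_le_norm _ _
    have h2 : ‖g (x + t • v) - g x‖ ≤ β * ‖x + t • v - x‖ := hsm _ _
    have h3 : ‖x + t • v - x‖ = t * ‖v‖ := by
      simp [norm_smul, abs_of_nonneg ht.1]
    have h4 : ⟪g (x + t • v), v⟫ - ⟪g x, v⟫ = ⟪g (x + t • v) - g x, v⟫ := by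
      rw [inner_sub_left]
    rw [h3] at h2
    nlinarith [mul_le_mul_of_nonneg_right h2 (norm_nonneg v)]
  have hval : (∫ t in (0:ℝ)..1, (⟪g x, v⟫ + β * ‖v‖ ^ 2 * t))
      = ⟪g x, v⟫ + β / 2 * ‖v‖ ^ 2 := by
    rw [intervalIntegral.integral_add (intervalIntegrable_const)
      ((by continuity : Continuous fun t : ℝ => β * ‖v‖ ^ 2 * t).intervalIntegrable 0 1)]
    have h5 : (∫ t in (0:ℝ)..1, β * ‖v‖ ^ 2 * t) = β * ‖v‖ ^ 2 * ∫ t in (0:ℝ)..1, t :=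
      intervalIntegral.integral_const_mul _ _
    rw [h5, integral_id]
    simp
    ring
  have h0 : f (x + (0:ℝ) • v) = f x := by simp
  have h1 : f (x + (1:ℝ) • v) = f y := by simp [hv]
  rw [h0, h1] at hftc
  linarith [hftc, hmono, hval.le, hval.ge]

lemma sgd_key {f : E → ℝ} {g : E → E} {β : ℝ} (hβ : 0 < β)
    (hconv : ConvexOn ℝ Set.univ f)
    (hg : ∀ θ, HasGradientAt f (g θ) θ)
    (hsm : ∀ θ θ', ‖g θ - g θ'‖ ≤ β * ‖θ - θ'‖)
    {θs : E} (hzero : g θs = 0) (θ : E) :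
    ‖g θ‖ ^ 2 ≤ 2 * β * ⟪g θ, θ - θs⟫ := by
  have hminθ : ∀ y, f θs ≤ f y := fun y => by
    have h := sgd_first_order hconv hg θs y
    simpa [hzero] using h
  set y := θ - (1 / β) • g θ with hy
  have hdesc := sgd_descent hβ hg hsm θ y
  have hyx : y - θ = -((1 / β) • g θ) := by rw [hy]; abel
  have hinner : ⟪g θ, y - θ⟫ = -(1 / β) * ‖g θ‖ ^ 2 := by
    rw [hyx, inner_neg_right, real_inner_smul_right, real_inner_self_eq_norm_sq]
    ring
  have hnorm : ‖y - θ‖ ^ 2 = (1 / β) ^ 2 * ‖g θ‖ ^ 2 := by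
    rw [hyx, norm_neg, norm_smul, mul_pow, Real.norm_eq_abs, sq_abs]
  rw [hinner, hnorm] at hdesc
  have h2 := hminθ y
  have h3 := sgd_first_order hconv hg θ θs
  have h4 : ⟪g θ, θs - θ⟫ = -⟪g θ, θ - θs⟫ := by
    rw [← inner_neg_right]; congr 1; abel
  rw [h4] at h3
  have hβ' : β ≠ 0 := hβ.ne'
  have : f θ - f θs ≥ 1 / (2 * β) * ‖g θ‖ ^ 2 := by
    have e : -(1 / β) * ‖g θ‖ ^ 2 + β / 2 * ((1 / β) ^ 2 * ‖g θ‖ ^ 2)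
        = -(1 / (2 * β)) * ‖g θ‖ ^ 2 := by field_simp; ring
    nlinarith [hdesc, h2]
  have h5 : 1 / (2 * β) * ‖g θ‖ ^ 2 ≤ ⟪g θ, θ - θs⟫ := by linarith
  have h6 := mul_le_mul_of_nonneg_left h5 (by positivity : (0:ℝ) ≤ 2 * β)
  have h7 : 2 * β * (1 / (2 * β) * ‖g θ‖ ^ 2) = ‖g θ‖ ^ 2 := by field_simp
  linarith

end SGDAux

/-- If `f = (1/n)Σᵢ fᵢ` is `α`-strongly convex, each `fᵢ` convex and `β`-smooth, `θ*`
minimizes `f`, and the gradient disagreement `σ_f² = E_i‖∇fᵢ(θ*)‖²` is zero, then SGD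
with fixed step size `η ∈ (0, 1/(2β))` satisfies
`E[‖θ_t − θ*‖²] ≤ (1 − ηα)^t ‖θ_0 − θ*‖²`. -/
theorem stmt16 {E : Type*} [NormedAddCommGroup E] [InnerProductSpace ℝ E] [CompleteSpace E]
    {n : ℕ} (hn : 0 < n) (f : Fin n → E → ℝ) (g : Fin n → E → E) (α β η : ℝ)
    (hη0 : 0 < η) (hη1 : η < 1 / (2 * β))
    (hconv : ∀ i, ConvexOn ℝ Set.univ (f i))
    (hgrad : ∀ i θ, HasGradientAt (f i) (g i θ) θ)
    (hsmooth : ∀ i θ θ', ‖g i θ - g i θ'‖ ≤ β * ‖θ - θ'‖)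
    (hsc : ∀ θ θ' : E,
      ⟪((n : ℝ)⁻¹ • ∑ i, g i θ) - ((n : ℝ)⁻¹ • ∑ i, g i θ'), θ - θ'⟫ ≥
        α * ‖θ - θ'‖ ^ 2)
    (θs : E)
    (hmin : ∀ θ, (n : ℝ)⁻¹ * ∑ i, f i θs ≤ (n : ℝ)⁻¹ * ∑ i, f i θ)
    (hσ : (n : ℝ)⁻¹ * ∑ i, ‖g i θs‖ ^ 2 = 0)
    (θ0 : E) :
    ∀ t : ℕ, ((n : ℝ) ^ t)⁻¹ * ∑ s : Fin t → Fin n, ‖sgdIter g η θ0 t s - θs‖ ^ 2 ≤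
      (1 - η * α) ^ t * ‖θ0 - θs‖ ^ 2 := by
  have hnpos : (0:ℝ) < n := Nat.cast_pos.mpr hn
  -- β > 0
  have hβ : 0 < β := by
    by_contra h
    push_neg at h
    have h2 : 1 / (2 * β) ≤ 0 := by
      rcases lt_or_eq_of_le h with h' | h'
      · exact le_of_lt (div_neg_of_pos_of_neg one_pos (by linarith))
      · rw [h']; norm_num
    linarith
  have hηβ : η * β < 1 / 2 := by
    have := (lt_div_iff₀ (by positivity : (0:ℝ) < 2 * β)).mp hη1
    linarith
  -- g i θs = 0
  have hg0 : ∀ i, g i θs = 0 := by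
    have hsum : ∑ j, ‖g j θs‖ ^ 2 = 0 := by
      rcases mul_eq_zero.mp hσ with h | h
      · exact absurd h (by positivity)
      · exact h
    intro i
    have h := (Finset.sum_eq_zero_iff_of_nonneg (fun j _ => sq_nonneg _)).mp hsum i
      (Finset.mem_univ i)
    have := pow_eq_zero_iff (n := 2) (by norm_num) |>.mp h
    simpa using this
  -- cocoercivity at the optimum
  have hkey : ∀ i θ, ‖g i θ‖ ^ 2 ≤ 2 * β * ⟪g i θ, θ - θs⟫ := fun i θ =>
    sgd_key hβ (hconv i) (hgrad i) (hsmooth i) (hg0 i) θ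
  have hkey0 : ∀ i θ, 0 ≤ ⟪g i θ, θ - θs⟫ := by
    intro i θ
    nlinarith [hkey i θ, sq_nonneg ‖g i θ‖, hβ]
  -- strong convexity sum form
  have hscS : ∀ θ : E, (n : ℝ) * α * ‖θ - θs‖ ^ 2 ≤ ∑ i, ⟪g i θ, θ - θs⟫ := by
    intro θ
    have h := hsc θ θs
    have h0 : ∑ i, g i θs = 0 := Finset.sum_eq_zero fun i _ => hg0 i
    rw [h0, smul_zero, sub_zero, real_inner_smul_left, sum_inner] at h
    have hn' : (0:ℝ) < (n:ℝ)⁻¹ := inv_pos.mpr hnpos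
    calc (n : ℝ) * α * ‖θ - θs‖ ^ 2 = (n : ℝ) * (α * ‖θ - θs‖ ^ 2) := by ring
      _ ≤ (n : ℝ) * ((n : ℝ)⁻¹ * ∑ i, ⟪g i θ, θ - θs⟫) :=
          mul_le_mul_of_nonneg_left h hnpos.le
      _ = ∑ i, ⟪g i θ, θ - θs⟫ := by field_simp
  -- one-step expected decrease
  have hstep : ∀ θ : E, ∑ i, ‖θ - η • g i θ - θs‖ ^ 2
      ≤ (n : ℝ) * ((1 - η * α) * ‖θ - θs‖ ^ 2) := by
    intro θ
    have hexp : ∀ i : Fin n, ‖θ - η • g i θ - θs‖ ^ 2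
        = ‖θ - θs‖ ^ 2 - 2 * η * ⟪g i θ, θ - θs⟫ + η ^ 2 * ‖g i θ‖ ^ 2 := by
      intro i
      have e1 : θ - η • g i θ - θs = (θ - θs) - η • g i θ := by abel
      rw [e1, norm_sub_sq_real, real_inner_smul_right, norm_smul, mul_pow,
        Real.norm_eq_abs, sq_abs, real_inner_comm]
      ring
    rw [Finset.sum_congr rfl fun i _ => hexp i]
    rw [Finset.sum_add_distrib, Finset.sum_sub_distrib, Finset.sum_const,
      Finset.card_univ, Fintype.card_fin, ← Finset.mul_sum, ← Finset.mul_sum]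
    set S := ∑ i, ⟪g i θ, θ - θs⟫ with hS
    set Q := ∑ i, ‖g i θ‖ ^ 2 with hQ
    have hQle : Q ≤ 2 * β * S := by
      rw [hQ, hS, Finset.mul_sum]
      exact Finset.sum_le_sum fun i _ => hkey i θ
    have hS0 : 0 ≤ S := Finset.sum_nonneg fun i _ => hkey0 i θ
    have hSα := hscS θ
    rw [nsmul_eq_mul]
    have h1 : η * β * (η * S) ≤ 1 / 2 * (η * S) :=
      mul_le_mul_of_nonneg_right hηβ.le (mul_nonneg hη0.le hS0)
    have h2 : η ^ 2 * Q ≤ η ^ 2 * (2 * β * S) :=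
      mul_le_mul_of_nonneg_left hQle (sq_nonneg η)
    have h3 : η * ((n : ℝ) * α * ‖θ - θs‖ ^ 2) ≤ η * S :=
      mul_le_mul_of_nonneg_left hSα hη0.le
    nlinarith [h1, h2, h3]
  -- trivial case
  by_cases htriv : ∀ v : E, v = 0
  · intro t
    have h1 : ∀ s : Fin t → Fin n, sgdIter g η θ0 t s - θs = 0 := fun s => htriv _
    have h2 : θ0 - θs = 0 := htriv _
    simp [h1, h2]
  -- nontrivial case: 1 - ηα ≥ 0
  push_neg at htriv
  obtain ⟨v, hv⟩ := htriv
  have h1α : 0 ≤ 1 - η * α := by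
    have h1 := hsc (θs + v) θs
    have h0 : ∑ i, g i θs = 0 := Finset.sum_eq_zero fun i _ => hg0 i
    rw [h0, smul_zero, sub_zero, add_sub_cancel_left] at h1
    have h2 : ⟪(n : ℝ)⁻¹ • ∑ i, g i (θs + v), v⟫ ≤ β * ‖v‖ ^ 2 := by
      have hc : ⟪(n : ℝ)⁻¹ • ∑ i, g i (θs + v), v⟫
          ≤ ‖(n : ℝ)⁻¹ • ∑ i, g i (θs + v)‖ * ‖v‖ := real_inner_le_norm _ _
      have hns : ‖(n : ℝ)⁻¹ • ∑ i, g i (θs + v)‖ ≤ β * ‖v‖ := by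
        rw [norm_smul, Real.norm_eq_abs, abs_of_pos (inv_pos.mpr hnpos)]
        have hb : ‖∑ i, g i (θs + v)‖ ≤ (n : ℝ) * (β * ‖v‖) := by
          calc ‖∑ i, g i (θs + v)‖ ≤ ∑ i, ‖g i (θs + v)‖ := norm_sum_le _ _
            _ ≤ ∑ _i : Fin n, β * ‖v‖ := by
                apply Finset.sum_le_sum
                intro i _
                have := hsmooth i (θs + v) θs
                rw [hg0 i, sub_zero, add_sub_cancel_left] at this
                exact this
            _ = (n : ℝ) * (β * ‖v‖) := by
                rw [Finset.sum_const, Finset.card_univ, Fintype.card_fin, nsmul_eq_mul]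
        calc (n : ℝ)⁻¹ * ‖∑ i, g i (θs + v)‖ ≤ (n : ℝ)⁻¹ * ((n : ℝ) * (β * ‖v‖)) :=
              mul_le_mul_of_nonneg_left hb (inv_pos.mpr hnpos).le
          _ = β * ‖v‖ := by field_simp
      calc ⟪(n : ℝ)⁻¹ • ∑ i, g i (θs + v), v⟫ ≤ ‖(n : ℝ)⁻¹ • ∑ i, g i (θs + v)‖ * ‖v‖ := hc
        _ ≤ β * ‖v‖ * ‖v‖ := mul_le_mul_of_nonneg_right hns (norm_nonneg v)
        _ = β * ‖v‖ ^ 2 := by ring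
    have hv2 : 0 < ‖v‖ ^ 2 := pow_pos (norm_pos_iff.mpr hv) 2
    have hαβ : α ≤ β := by nlinarith [h1, h2]
    nlinarith [mul_le_mul_of_nonneg_left hαβ hη0.le]
  -- induction
  intro t
  induction t with
  | zero => simp [sgdIter]
  | succ t ih =>
    have hsplit : ∑ s : Fin (t + 1) → Fin n, ‖sgdIter g η θ0 (t + 1) s - θs‖ ^ 2
        = ∑ p : Fin n × (Fin t → Fin n),
            ‖sgdIter g η θ0 t p.2 - η • g p.1 (sgdIter g η θ0 t p.2) - θs‖ ^ 2 := by
      rw [← Equiv.sum_comp (Fin.snocEquiv (fun _ => Fin n))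
        (fun s => ‖sgdIter g η θ0 (t + 1) s - θs‖ ^ 2)]
      apply Finset.sum_congr rfl
      intro p _
      have h1 : (fun j : Fin t => (Fin.snocEquiv (fun _ => Fin n) p) j.castSucc) = p.2 := by
        funext j
        simp [Fin.snocEquiv, Fin.snoc_castSucc]
      have h2 : (Fin.snocEquiv (fun _ => Fin n) p) (Fin.last t) = p.1 := by
        simp [Fin.snocEquiv, Fin.snoc_last]
      show ‖sgdIter g η θ0 t (fun j => (Fin.snocEquiv (fun _ => Fin n) p) j.castSucc) -
          η • g ((Fin.snocEquiv (fun _ => Fin n) p) (Fin.last t))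
            (sgdIter g η θ0 t (fun j => (Fin.snocEquiv (fun _ => Fin n) p) j.castSucc)) - θs‖ ^ 2
        = _
      rw [h1, h2]
    calc ((n : ℝ) ^ (t + 1))⁻¹ * ∑ s : Fin (t + 1) → Fin n, ‖sgdIter g η θ0 (t + 1) s - θs‖ ^ 2
        ≤ ((n : ℝ) ^ (t + 1))⁻¹ *
            ((n : ℝ) * ((1 - η * α) * ∑ s : Fin t → Fin n, ‖sgdIter g η θ0 t s - θs‖ ^ 2)) := by
          apply mul_le_mul_of_nonneg_left _ (by positivity)
          rw [hsplit, Fintype.sum_prod_type]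
          rw [Finset.sum_comm]
          calc ∑ s : Fin t → Fin n, ∑ i : Fin n,
                ‖sgdIter g η θ0 t s - η • g i (sgdIter g η θ0 t s) - θs‖ ^ 2
              ≤ ∑ s : Fin t → Fin n, (n : ℝ) * ((1 - η * α) * ‖sgdIter g η θ0 t s - θs‖ ^ 2) :=
                Finset.sum_le_sum fun s _ => hstep _
            _ = (n : ℝ) * ((1 - η * α) * ∑ s : Fin t → Fin n, ‖sgdIter g η θ0 t s - θs‖ ^ 2) := by
                rw [← Finset.mul_sum, ← Finset.mul_sum]
      _ = (1 - η * α) * (((n : ℝ) ^ t)⁻¹ * ∑ s : Fin t → Fin n, ‖sgdIter g η θ0 t s - θs‖ ^ 2) := by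
          rw [pow_succ]
          field_simp
      _ ≤ (1 - η * α) * ((1 - η * α) ^ t * ‖θ0 - θs‖ ^ 2) := mul_le_mul_of_nonneg_left ih h1α
      _ = (1 - η * α) ^ (t + 1) * ‖θ0 - θs‖ ^ 2 := by ring
end
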